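/- arXiv:2207.14148 — 3 statements merged into one kernel-verified Lean document; each statement's English description precedes it below -/
import Mathlib

section
/- Let 0 < p < 1, 0 < λ < 1, and suppose (2 − 2p² + λp³)/p > 1. Then the function D(x) = (2 − 2p² + λp³ − λp³x²)/(1 − λp²x)² attains its maximum on [0,1] at x = 1, with maximum value D(1) = (2 − 2p²)/(1 − λp²)²; hence D(x) ≤ (2 − 2p²)/(1 − λp²)² for all x ∈ [0,1]. -/
theorem stmt_9 (p lam : ℝ) (hp1 : 0 < p) (hp2 : p < 1) (hl1 : 0 < lam) (hl2 : lam < 1)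
    (hx0 : 1 < (2 - 2 * p ^ 2 + lam * p ^ 3) / p) (x : ℝ) (hx : x ∈ Set.Icc (0 : ℝ) 1) :
    (2 - 2 * p ^ 2 + lam * p ^ 3 * (1 - x ^ 2)) / (1 - lam * p ^ 2 * x) ^ 2 ≤
      (2 - 2 * p ^ 2) / (1 - lam * p ^ 2) ^ 2 := by
  obtain ⟨hx1, hx2⟩ := hx
  have ht : 0 < lam * p ^ 2 := by positivity
  have hlp : lam * p ^ 2 < 1 := by nlinarith
  have hd2 : 0 < 1 - lam * p ^ 2 := by linarith
  have hd1 : 0 < 1 - lam * p ^ 2 * x := by nlinarith [mul_le_mul_of_nonneg_left hx2 ht.le]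
  have hp' : p * (1 - lam * p ^ 2) < 2 - 2 * p ^ 2 := by
    have h := (lt_div_iff₀ hp1).mp hx0
    nlinarith
  have h2 : 0 ≤ (1 - x) * (lam * p ^ 2) * ((1 - x) *
      ((2 - 2 * p ^ 2) * (lam * p ^ 2) + p * (1 - lam * p ^ 2) ^ 2)) := by
    have : 0 < (2 - 2 * p ^ 2) * (lam * p ^ 2) + p * (1 - lam * p ^ 2) ^ 2 := by nlinarith
    have h1x : 0 ≤ 1 - x := by linarith
    positivity
  have h3 : 0 ≤ (1 - x) * (lam * p ^ 2) * (2 * (1 - lam * p ^ 2) *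
      ((2 - 2 * p ^ 2) - p * (1 - lam * p ^ 2))) := by
    have h1x : 0 ≤ 1 - x := by linarith
    have : 0 ≤ (2 - 2 * p ^ 2) - p * (1 - lam * p ^ 2) := by linarith
    positivity
  rw [div_le_div_iff₀ (by positivity) (by positivity)]
  nlinarith [h2, h3]
end

section
/- Let 0 < p < 1, 0 < λ < 1, and set x₀ = (2 − 2p² + λp³)/p. If 0 < x₀ < 1, then for all x ∈ [0,1], D(x) ≤ D(x₀), where D(x) = (2 − 2p² + λp³(1 − x²))/(1 − λp²x)². -/
theorem stmt_10 (p lam : ℝ) (hp1 : 0 < p) (hp2 : p < 1) (hl1 : 0 < lam) (hl2 : lam < 1)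
    (x₀ : ℝ) (hx0 : x₀ = (2 - 2 * p ^ 2 + lam * p ^ 3) / p)
    (hx01 : 0 < x₀) (hx02 : x₀ < 1) (x : ℝ) (hx : x ∈ Set.Icc (0 : ℝ) 1) :
    (2 - 2 * p ^ 2 + lam * p ^ 3 * (1 - x ^ 2)) / (1 - lam * p ^ 2 * x) ^ 2 ≤
      (2 - 2 * p ^ 2 + lam * p ^ 3 * (1 - x₀ ^ 2)) / (1 - lam * p ^ 2 * x₀) ^ 2 := by
  obtain ⟨hx1, hx2⟩ := hx
  have hq : lam * p ^ 2 < 1 := by nlinarith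
  have hd1 : 0 < 1 - lam * p ^ 2 * x := by nlinarith [mul_le_of_le_one_right (mul_pos hl1 (pow_pos hp1 2)).le hx2]
  have hd2 : 0 < 1 - lam * p ^ 2 * x₀ := by nlinarith
  have hpx : p * x₀ = 2 - 2 * p ^ 2 + lam * p ^ 3 := by
    field_simp at hx0; linarith
  rw [div_le_div_iff₀ (by positivity) (by positivity)]
  nlinarith [mul_nonneg (mul_nonneg (mul_nonneg hl1.le (pow_pos hp1 3).le)
      (sq_nonneg (x - x₀))) hd2.le, sq_nonneg (x - x₀)]
end

section
/- Let p₀ ∈ (1/3, 1) be the unique zero of g(p) = 4·ln(1 + p) − 3p in (0,1], and let p ∈ (p₀, 1). Define w_p(a) = (2/p)·∫₀ᵖ (a + t)/(1 + a t) dt − a on [0,1]. Then there exists a unique a_p ∈ (0,1) with w_p'(a_p) = 0, w_p is strictly increasing on [0, a_p], strictly decreasing on [a_p, 1], and w_p(a_p) > 1. -/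
/-!
Differentiating under the integral sign gives
`w_p'(a) = (2/p) ∫₀ᵖ (1 - t²)/(1 + a t)² dt - 1`, which is strictly decreasing in `a`
because the integrand is. Its endpoint values are `1 - 2p²/3 > 0` and
`(4 ln(1 + p) - 3p)/p`, which is negative since `4 ln(1 + q) - 3q` decreases for `q > 1/3`
and vanishes at `p₀ < p`. Hence `w_p'` has exactly one zero `a_p`, `w_p` rises then falls, and
`w_p(a_p) > w_p(1) = 1`.
-/

open Set MeasureTheory intervalIntegral

theorem exists_unique_deriv_eq_zero_of_strictAntiOn {f f' : ℝ → ℝ} {a b : ℝ} (hab : a ≤ b)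
    (hf : ∀ x ∈ Icc a b, HasDerivAt f (f' x) x) (hf' : StrictAntiOn f' (Icc a b))
    (ha : 0 < f' a) (hb : f' b < 0) :
    ∃ c ∈ Ioo a b, f' c = 0 ∧ (∀ x ∈ Icc a b, f' x = 0 → x = c) ∧
      StrictMonoOn f (Icc a c) ∧ StrictAntiOn f (Icc c b) := by
  obtain ⟨c, hc, hfc⟩ := exists_hasDerivWithinAt_eq_of_lt_of_gt hab
    (fun x hx => (hf x hx).hasDerivWithinAt) ha hb
  have hcab : c ∈ Icc a b := Ioo_subset_Icc_self hc
  have hcont : ContinuousOn f (Icc a b) := fun x hx => (hf x hx).continuousAt.continuousWithinAt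
  refine ⟨c, hc, hfc, fun x hx hx0 => hf'.injOn hx hcab (hx0.trans hfc.symm), ?_, ?_⟩
  · refine strictMonoOn_of_deriv_pos (convex_Icc a c)
      (hcont.mono (Icc_subset_Icc_right hc.2.le)) fun x hx => ?_
    rw [interior_Icc] at hx
    have hx' : x ∈ Icc a b := ⟨hx.1.le, hx.2.le.trans hc.2.le⟩
    rw [(hf x hx').deriv, ← hfc]
    exact hf' hx' hcab hx.2
  · refine strictAntiOn_of_deriv_neg (convex_Icc c b)
      (hcont.mono (Icc_subset_Icc_left hc.1.le)) fun x hx => ?_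
    rw [interior_Icc] at hx
    have hx' : x ∈ Icc a b := ⟨hc.1.le.trans hx.1.le, hx.2.le⟩
    rw [(hf x hx').deriv, ← hfc]
    exact hf' hcab hx' hx.1

theorem strictAntiOn_four_mul_log_one_add_sub_three_mul :
    StrictAntiOn (fun q : ℝ => 4 * Real.log (1 + q) - 3 * q) (Ici (1 / 3)) := by
  have hderiv : ∀ q : ℝ, 0 < 1 + q →
      HasDerivAt (fun q : ℝ => 4 * Real.log (1 + q) - 3 * q) (4 * (1 / (1 + q)) - 3 * 1) q :=
    fun q hq => ((((hasDerivAt_id q).const_add 1).log hq.ne').const_mul 4).sub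
      ((hasDerivAt_id q).const_mul 3)
  refine strictAntiOn_of_deriv_neg (convex_Ici _)
    (fun q hq => (hderiv q (by linarith [mem_Ici.1 hq])).continuousAt.continuousWithinAt)
    fun q hq => ?_
  rw [interior_Ici, mem_Ioi] at hq
  have hq0 : 0 < 1 + q := by linarith
  rw [(hderiv q hq0).deriv, mul_one_div, mul_one, sub_neg, div_lt_iff₀ hq0]
  linarith

lemma one_half_lt_one_add_mul {x t : ℝ} (hx : -(1 / 2) < x) (ht₀ : 0 ≤ t) (ht₁ : t ≤ 1) :
    1 / 2 < 1 + x * t := by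
  nlinarith [mul_nonneg (by linarith : (0 : ℝ) ≤ x + 1 / 2) ht₀]

noncomputable def w (p a : ℝ) : ℝ := (2 / p * ∫ t in (0 : ℝ)..p, (a + t) / (1 + a * t)) - a

noncomputable def w' (p a : ℝ) : ℝ := 2 / p * (∫ t in (0 : ℝ)..p, (1 - t ^ 2) / (1 + a * t) ^ 2) - 1

section

variable {p : ℝ}

lemma continuousOn_one_sub_sq_div_sq {a : ℝ} (ha : 0 ≤ a) :
    ContinuousOn (fun t : ℝ => (1 - t ^ 2) / (1 + a * t) ^ 2) (Ici 0) :=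
  ContinuousOn.div (by fun_prop) (by fun_prop) fun t ht => by
    have : 0 ≤ a * t := mul_nonneg ha ht
    positivity

lemma intervalIntegrable_one_sub_sq_div_sq {a : ℝ} (ha : 0 ≤ a) (hp : 0 ≤ p) :
    IntervalIntegrable (fun t : ℝ => (1 - t ^ 2) / (1 + a * t) ^ 2) volume 0 p :=
  ((continuousOn_one_sub_sq_div_sq ha).mono
    (by rw [uIcc_of_le hp]; exact Icc_subset_Ici_self)).intervalIntegrable

lemma hasDerivAt_integral_add_div_one_add_mul (hp₀ : 0 ≤ p) (hp₁ : p ≤ 1) {a : ℝ} (ha : 0 ≤ a) :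
    HasDerivAt (fun b : ℝ => ∫ t in (0 : ℝ)..p, (b + t) / (1 + b * t))
      (∫ t in (0 : ℝ)..p, (1 - t ^ 2) / (1 + a * t) ^ 2) a := by
  have hIoc : uIoc 0 p = Ioc 0 p := uIoc_of_le hp₀
  have hball : Metric.ball a (1 / 2) ∈ nhds a := Metric.ball_mem_nhds a (by norm_num)
  have hden : ∀ x ∈ Metric.ball a (1 / 2), ∀ t ∈ Ioc (0 : ℝ) p, 1 / 2 < 1 + x * t := by
    intro x hx t ht
    rw [Metric.mem_ball, Real.dist_eq, abs_lt] at hx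
    exact one_half_lt_one_add_mul (by linarith) ht.1.le (ht.2.trans hp₁)
  refine (hasDerivAt_integral_of_dominated_loc_of_deriv_le
    (F := fun x t => (x + t) / (1 + x * t)) (F' := fun x t => (1 - t ^ 2) / (1 + x * t) ^ 2)
    (bound := fun _ => 4) hball ?_ ?_ ?_ ?_ intervalIntegrable_const ?_).2
  · filter_upwards [hball] with x hx
    refine ContinuousOn.aestronglyMeasurable ?_ measurableSet_uIoc
    rw [hIoc]
    exact ContinuousOn.div (by fun_prop) (by fun_prop) fun t ht => by
      linarith [hden x hx t ht]
  · refine ContinuousOn.intervalIntegrable (ContinuousOn.div (by fun_prop) (by fun_prop) ?_)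
    intro t ht
    rw [uIcc_of_le hp₀] at ht
    nlinarith [mul_nonneg ha ht.1]
  · exact ((continuousOn_one_sub_sq_div_sq ha).mono
      (by simp [hIoc, Ioc_subset_Ioi_self.trans Ioi_subset_Ici_self])).aestronglyMeasurable
      measurableSet_uIoc
  · refine Filter.Eventually.of_forall fun t ht x hx => ?_
    rw [hIoc] at ht
    have hd := hden x hx t ht
    have hnum : |1 - t ^ 2| ≤ 1 := by
      rw [abs_le]; constructor <;> nlinarith [ht.1, ht.2.trans hp₁]
    have hsq : 0 < (1 + x * t) ^ 2 := pow_pos (by linarith) 2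
    rw [Real.norm_eq_abs, abs_div, abs_of_pos hsq, div_le_iff₀ hsq]
    nlinarith
  · refine Filter.Eventually.of_forall fun t ht x hx => ?_
    rw [hIoc] at ht
    have hd : 1 + x * t ≠ 0 := by linarith [hden x hx t ht]
    refine (((hasDerivAt_id x).add_const t).div
      (((hasDerivAt_id x).mul_const t).const_add 1) hd).congr_deriv ?_
    simp only [id]
    field_simp
    ring

lemma hasDerivAt_w (hp₀ : 0 ≤ p) (hp₁ : p ≤ 1) {a : ℝ} (ha : 0 ≤ a) :
    HasDerivAt (w p) (w' p a) a :=
  ((hasDerivAt_integral_add_div_one_add_mul hp₀ hp₁ ha).const_mul (2 / p)).sub (hasDerivAt_id a)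

lemma strictAntiOn_integral_one_sub_sq_div_sq (hp₀ : 0 < p) (hp₁ : p ≤ 1) :
    StrictAntiOn (fun a : ℝ => ∫ t in (0 : ℝ)..p, (1 - t ^ 2) / (1 + a * t) ^ 2) (Ici 0) := by
  intro a ha b hb hab
  rw [mem_Ici] at ha hb
  have hia := intervalIntegrable_one_sub_sq_div_sq ha hp₀.le
  have hib := intervalIntegrable_one_sub_sq_div_sq hb hp₀.le
  rw [← sub_pos, ← integral_sub hia hib]
  refine intervalIntegral_pos_of_pos_on (hia.sub hib) (fun t ht => ?_) hp₀
  obtain ⟨ht₀, htp⟩ := ht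
  have hda : 0 < 1 + a * t := by nlinarith [mul_nonneg ha ht₀.le]
  have hdb : 0 < 1 + b * t := by nlinarith [mul_nonneg hb ht₀.le]
  have hnum : 0 < 1 - t ^ 2 := by nlinarith
  have hsq : (1 + a * t) ^ 2 < (1 + b * t) ^ 2 := by
    nlinarith [mul_pos (mul_pos (sub_pos.2 hab) ht₀) (add_pos hda hdb)]
  exact sub_pos.2 (div_lt_div_of_pos_left hnum (by positivity) hsq)

lemma strictAntiOn_w' (hp₀ : 0 < p) (hp₁ : p ≤ 1) : StrictAntiOn (w' p) (Ici 0) :=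
  fun _ ha _ hb hab => sub_lt_sub_right
    (mul_lt_mul_of_pos_left (strictAntiOn_integral_one_sub_sq_div_sq hp₀ hp₁ ha hb hab)
      (by positivity)) 1

lemma w'_zero (hp : p ≠ 0) : w' p 0 = 1 - 2 * p ^ 2 / 3 := by
  have hint : (∫ t in (0 : ℝ)..p, (1 - t ^ 2) / (1 + 0 * t) ^ 2) = p - p ^ 3 / 3 := by
    norm_num [integral_pow]
  rw [w', hint]
  field_simp
  ring

lemma w'_one (hp : 0 < p) : w' p 1 = (4 * Real.log (1 + p) - 3 * p) / p := by
  have hprim : ∀ t ∈ uIcc 0 p, HasDerivAt (fun s : ℝ => 2 * Real.log (1 + s) - s)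
      ((1 - t ^ 2) / (1 + 1 * t) ^ 2) t := by
    intro t ht
    rw [uIcc_of_le hp.le] at ht
    have h1t : 0 < 1 + t := by linarith [ht.1]
    refine ((((hasDerivAt_id t).const_add 1).log h1t.ne').const_mul 2).sub
      (hasDerivAt_id t) |>.congr_deriv ?_
    simp only [id]
    field_simp
    ring
  rw [w', integral_eq_sub_of_hasDerivAt hprim
    (intervalIntegrable_one_sub_sq_div_sq zero_le_one hp.le)]
  field_simp
  simp only [add_zero, Real.log_one, mul_zero, sub_self, sub_zero]
  ring

lemma w_one (hp : 0 < p) : w p 1 = 1 := by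
  have hint : (∫ t in (0 : ℝ)..p, (1 + t) / (1 + 1 * t)) = ∫ _ in (0 : ℝ)..p, (1 : ℝ) :=
    integral_congr fun t ht => by
      rw [uIcc_of_le hp.le] at ht
      rw [one_mul, div_self (by linarith [ht.1])]
  rw [w, hint, intervalIntegral.integral_const, smul_eq_mul, mul_one, sub_zero, div_mul_cancel₀ _ hp.ne']
  norm_num

end

theorem stmt_19_general (p₀ : ℝ) (hp₀ : p₀ ∈ Set.Ioo (1 / 3 : ℝ) 1)
    (hg : 4 * Real.log (1 + p₀) - 3 * p₀ = 0)
    (p : ℝ) (hp1 : p₀ < p) (hp2 : p < 1) :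
    ∃ ap ∈ Set.Ioo (0 : ℝ) 1,
      deriv (fun b : ℝ => (2 / p * ∫ t in (0 : ℝ)..p, (b + t) / (1 + b * t)) - b) ap = 0 ∧
      (∀ b ∈ Set.Ioo (0 : ℝ) 1,
        deriv (fun c : ℝ => (2 / p * ∫ t in (0 : ℝ)..p, (c + t) / (1 + c * t)) - c) b = 0 →
          b = ap) ∧
      StrictMonoOn (fun b : ℝ => (2 / p * ∫ t in (0 : ℝ)..p, (b + t) / (1 + b * t)) - b)
        (Set.Icc 0 ap) ∧
      StrictAntiOn (fun b : ℝ => (2 / p * ∫ t in (0 : ℝ)..p, (b + t) / (1 + b * t)) - b)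
        (Set.Icc ap 1) ∧
      1 < (2 / p * ∫ t in (0 : ℝ)..p, (ap + t) / (1 + ap * t)) - ap := by
  have hp : 0 < p := by linarith [hp₀.1]
  have hderiv : ∀ a ∈ Icc (0 : ℝ) 1, HasDerivAt (w p) (w' p a) a :=
    fun a ha => hasDerivAt_w hp.le hp2.le ha.1
  have hg_neg : 4 * Real.log (1 + p) - 3 * p < 0 := hg ▸
    strictAntiOn_four_mul_log_one_add_sub_three_mul (mem_Ici.2 hp₀.1.le)
      (mem_Ici.2 (by linarith [hp₀.1])) hp1
  have hw'0 : 0 < w' p 0 := by rw [w'_zero hp.ne']; nlinarith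
  have hw'1 : w' p 1 < 0 := by rw [w'_one hp]; exact div_neg_of_neg_of_pos hg_neg hp
  obtain ⟨ap, hap, hw'ap, huniq, hmono, hanti⟩ := exists_unique_deriv_eq_zero_of_strictAntiOn
    zero_le_one hderiv ((strictAntiOn_w' hp hp2.le).mono Icc_subset_Ici_self) hw'0 hw'1
  refine ⟨ap, hap, (hderiv ap (Ioo_subset_Icc_self hap)).deriv.trans hw'ap,
    fun b hb hb0 => huniq b (Ioo_subset_Icc_self hb)
      ((hderiv b (Ioo_subset_Icc_self hb)).deriv.symm.trans hb0), hmono, hanti, ?_⟩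
  have := hanti (left_mem_Icc.2 hap.2.le) (right_mem_Icc.2 hap.2.le) hap.2
  rwa [w_one hp] at this

theorem stmt_19 (p₀ : ℝ) (hp₀ : p₀ ∈ Set.Ioo (1 / 3 : ℝ) 1)
    (hg : 4 * Real.log (1 + p₀) - 3 * p₀ = 0)
    (huniq : ∀ q ∈ Set.Ioc (0 : ℝ) 1, 4 * Real.log (1 + q) - 3 * q = 0 → q = p₀)
    (p : ℝ) (hp1 : p₀ < p) (hp2 : p < 1) :
    ∃ ap ∈ Set.Ioo (0 : ℝ) 1,
      deriv (fun b : ℝ => (2 / p * ∫ t in (0 : ℝ)..p, (b + t) / (1 + b * t)) - b) ap = 0 ∧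
      (∀ b ∈ Set.Ioo (0 : ℝ) 1,
        deriv (fun c : ℝ => (2 / p * ∫ t in (0 : ℝ)..p, (c + t) / (1 + c * t)) - c) b = 0 →
          b = ap) ∧
      StrictMonoOn (fun b : ℝ => (2 / p * ∫ t in (0 : ℝ)..p, (b + t) / (1 + b * t)) - b)
        (Set.Icc 0 ap) ∧
      StrictAntiOn (fun b : ℝ => (2 / p * ∫ t in (0 : ℝ)..p, (b + t) / (1 + b * t)) - b)
        (Set.Icc ap 1) ∧
      1 < (2 / p * ∫ t in (0 : ℝ)..p, (ap + t) / (1 + ap * t)) - ap :=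
  stmt_19_general p₀ hp₀ hg p hp1 hp2
end
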